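/- For n ≥ 4, the characteristic polynomial of the Hermitian adjacency matrix of C'_{n−1,n} satisfies the identity charpoly(C'_{n−1,n}) = X · (X · p_{n−2} − 2 · p_{n−3}) − p_{n−2} in ℂ[X], where p_m denotes the characteristic polynomial of the adjacency matrix of the path graph on m vertices, with p_0 = 1. -/

import Mathlib

open Polynomial Filter

/-- A matrix `H` is the Hermitian adjacency matrix of a mixed graph: zero diagonal,
entries in `{0, 1, i, -i}`, and Hermitian. -/
def IsMixedAdj {V : Type*} (H : Matrix V V ℂ) : Prop :=
  (∀ v, H v v = 0) ∧
  (∀ u v, H u v = 0 ∨ H u v = 1 ∨ H u v = Complex.I ∨ H u v = -Complex.I) ∧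
  (∀ u v, H u v = star (H v u))

/-- The spectral radius of a matrix: the maximum of `|λ|` over its eigenvalues. -/
noncomputable def specRad {V : Type*} [Fintype V] [DecidableEq V] (H : Matrix V V ℂ) : ℝ :=
  sSup ((fun z : ℂ => ‖z‖) '' spectrum ℂ H)

/-- The largest (real) eigenvalue of a Hermitian matrix. -/
noncomputable def lam1 {V : Type*} [Fintype V] [DecidableEq V] (H : Matrix V V ℂ) : ℝ :=
  sSup {x : ℝ | (x : ℂ) ∈ spectrum ℂ H}

/-- The underlying simple graph of a mixed graph: `u ∼ v` iff `H u v ≠ 0`. -/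
def underGraph {V : Type*} (H : Matrix V V ℂ) : SimpleGraph V :=
  SimpleGraph.fromRel fun u v => H u v ≠ 0

/-- The diameter of a finite simple graph. -/
noncomputable def gdiam {V : Type*} [Fintype V] (G : SimpleGraph V) : ℕ :=
  Finset.univ.sup fun p : V × V => G.dist p.1 p.2

/-- Degree of a vertex in a mixed graph. -/
noncomputable def mdeg {V : Type*} (H : Matrix V V ℂ) (v : V) : ℕ :=
  Nat.card {u // H v u ≠ 0}

/-- Maximum degree of a mixed graph. -/
noncomputable def maxDeg {V : Type*} [Fintype V] (H : Matrix V V ℂ) : ℕ :=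
  Finset.univ.sup (mdeg H)

/-- Adjacency matrix (over ℂ) of the path graph on `m` vertices. -/
def pathAdj (m : ℕ) : Matrix (Fin m) (Fin m) ℂ :=
  Matrix.of fun i j => if (i : ℕ) + 1 = (j : ℕ) ∨ (j : ℕ) + 1 = (i : ℕ) then 1 else 0

/-- `p_m`: characteristic polynomial of the path on `m` vertices (`p_0 = 1`). -/
noncomputable def pPoly (m : ℕ) : Polynomial ℂ := (pathAdj m).charpoly

/-- Build a Hermitian matrix on `Fin n` from a generator of "upper" entries. -/
noncomputable def mkHerm (n : ℕ) (g : ℕ → ℕ → ℂ) : Matrix (Fin n) (Fin n) ℂ :=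
  Matrix.of fun i j => g (i : ℕ) (j : ℕ) + star (g (j : ℕ) (i : ℕ))

/-- `C'_{n-1,n}`: imaginary `(n-1)`-cycle on `0,…,n-2` with a pendant vertex `n-1` at `0`. -/
noncomputable def CpPend (n : ℕ) : Matrix (Fin n) (Fin n) ℂ :=
  mkHerm n fun a b =>
    if a + 1 = b ∧ b ≤ n - 2 then 1
    else if a = n - 2 ∧ b = 0 then Complex.I
    else if a = 0 ∧ b = n - 1 then 1 else 0

/-- `C'_{3,n}`: imaginary triangle on `0,1,2` with an undirected path `0,3,4,…,n-1`. -/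
noncomputable def Cp3 (n : ℕ) : Matrix (Fin n) (Fin n) ℂ :=
  mkHerm n fun a b =>
    if (a = 0 ∧ b = 1) ∨ (a = 1 ∧ b = 2) ∨ (a = 0 ∧ b = 3) then 1
    else if a = 2 ∧ b = 0 then Complex.I
    else if 3 ≤ a ∧ a + 1 = b then 1 else 0

/-- `C'_{k,k+2}`: imaginary `k`-cycle on `0,…,k-1` with a pendant path `0,k,k+1`. -/
noncomputable def CpTail (k : ℕ) : Matrix (Fin (k + 2)) (Fin (k + 2)) ℂ :=
  mkHerm (k + 2) fun a b =>
    if a + 1 = b ∧ b ≤ k - 1 then 1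
    else if a = k - 1 ∧ b = 0 then Complex.I
    else if a = 0 ∧ b = k then 1
    else if a = k ∧ b = k + 1 then 1 else 0

/-- `D_{k,t}`: imaginary `k`-cycle with pendant vertices `k` at `0` and `k+1` at `t`. -/
noncomputable def Dkt (k t : ℕ) : Matrix (Fin (k + 2)) (Fin (k + 2)) ℂ :=
  mkHerm (k + 2) fun a b =>
    if a + 1 = b ∧ b ≤ k - 1 then 1
    else if a = k - 1 ∧ b = 0 then Complex.I
    else if a = 0 ∧ b = k then 1
    else if a = t ∧ b = k + 1 then 1 else 0

/-- `C'_n`: the imaginary `n`-cycle on `ZMod n`. -/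
noncomputable def CpCycle (n : ℕ) [NeZero n] : Matrix (ZMod n) (ZMod n) ℂ :=
  Matrix.of fun j l =>
    (if l = j + 1 then (if j = -1 then Complex.I else 1) else 0)
    + (if j = l + 1 then (if l = -1 then -Complex.I else 1) else 0)

/-- `C_n`: the undirected `n`-cycle. -/
noncomputable def Cund (n : ℕ) : Matrix (Fin n) (Fin n) ℂ :=
  mkHerm n fun a b => if a + 1 = b ∨ (a = n - 1 ∧ b = 0) then 1 else 0

/-- `C''_n`: the negative `n`-cycle. -/
noncomputable def Cneg (n : ℕ) : Matrix (Fin n) (Fin n) ℂ :=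
  mkHerm n fun a b =>
    if a + 1 = b ∧ b ≤ n - 2 then 1
    else if a = n - 2 ∧ b = n - 1 then Complex.I
    else if a = n - 1 ∧ b = 0 then Complex.I else 0

/-- `G''_{n-2,n/2}`: negative `(n-2)`-cycle with pendant edges at `v₁` and `v_{n/2}`. -/
noncomputable def Gpp (n : ℕ) : Matrix (Fin n) (Fin n) ℂ :=
  mkHerm n fun a b =>
    if a + 1 = b ∧ b ≤ n - 4 then 1
    else if a = n - 4 ∧ b = n - 3 then Complex.I
    else if a = n - 3 ∧ b = 0 then Complex.I
    else if a = 0 ∧ b = n - 2 then 1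
    else if a = n / 2 - 1 ∧ b = n - 1 then 1 else 0

/-- `U''_{k,m}`: negative `6`-cycle with pendant paths of `k` vertices at `v₁`
and `m` vertices at `v₄`. -/
noncomputable def Upp (k m : ℕ) : Matrix (Fin (6 + k + m)) (Fin (6 + k + m)) ℂ :=
  mkHerm (6 + k + m) fun a b =>
    if a + 1 = b ∧ b ≤ 4 then 1
    else if a = 4 ∧ b = 5 then Complex.I
    else if a = 5 ∧ b = 0 then Complex.I
    else if a = 0 ∧ b = 6 ∧ 1 ≤ k then 1
    else if 6 ≤ a ∧ a + 1 = b ∧ b ≤ 5 + k then 1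
    else if a = 3 ∧ b = 6 + k ∧ 1 ≤ m then 1
    else if 6 + k ≤ a ∧ a + 1 = b ∧ b ≤ 5 + k + m then 1 else 0

/-- `G''_{8,4}`: negative `8`-cycle with pendant edges at `v₁` and `v₄`. -/
noncomputable def Gpp84 : Matrix (Fin 10) (Fin 10) ℂ :=
  mkHerm 10 fun a b =>
    if a + 1 = b ∧ b ≤ 6 then 1
    else if a = 6 ∧ b = 7 then Complex.I
    else if a = 7 ∧ b = 0 then Complex.I
    else if (a = 0 ∧ b = 8) ∨ (a = 3 ∧ b = 9) then 1 else 0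

/-- `G''_{10,5}`: negative `10`-cycle with pendant edges at `v₁` and `v₅`. -/
noncomputable def Gpp105 : Matrix (Fin 12) (Fin 12) ℂ :=
  mkHerm 12 fun a b =>
    if a + 1 = b ∧ b ≤ 8 then 1
    else if a = 8 ∧ b = 9 then Complex.I
    else if a = 9 ∧ b = 0 then Complex.I
    else if (a = 0 ∧ b = 10) ∨ (a = 4 ∧ b = 11) then 1 else 0

/-- `U''_6`: negative `6`-cycle with a pendant path of 2 vertices at `v₁`
and pendant edges at `v₃`, `v₅`. -/
noncomputable def Upp6 : Matrix (Fin 10) (Fin 10) ℂ :=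
  mkHerm 10 fun a b =>
    if a + 1 = b ∧ b ≤ 4 then 1
    else if a = 4 ∧ b = 5 then Complex.I
    else if a = 5 ∧ b = 0 then Complex.I
    else if (a = 0 ∧ b = 6) ∨ (a = 6 ∧ b = 7) ∨ (a = 2 ∧ b = 8) ∨ (a = 4 ∧ b = 9) then 1 else 0

/-- `U''_8`: negative `8`-cycle with pendant paths of 2 vertices at `v₁` and `v₅`. -/
noncomputable def Upp8 : Matrix (Fin 12) (Fin 12) ℂ :=
  mkHerm 12 fun a b =>
    if a + 1 = b ∧ b ≤ 6 then 1
    else if a = 6 ∧ b = 7 then Complex.I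
    else if a = 7 ∧ b = 0 then Complex.I
    else if (a = 0 ∧ b = 8) ∨ (a = 8 ∧ b = 9) ∨ (a = 4 ∧ b = 10) ∨ (a = 10 ∧ b = 11) then 1
    else 0

/-- Two mixed graphs are switching isomorphic. -/
def IsSwitchIso {V₁ V₂ : Type*} (H₁ : Matrix V₁ V₁ ℂ) (H₂ : Matrix V₂ V₂ ℂ) : Prop :=
  ∃ (σ : V₁ ≃ V₂) (d : V₁ → ℂ),
    (∀ v, d v = 1 ∨ d v = -1 ∨ d v = Complex.I ∨ d v = -Complex.I) ∧
    ((∀ u v, H₂ (σ u) (σ v) = (d u)⁻¹ * H₁ u v * d v) ∨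
     (∀ u v, H₂ (σ u) (σ v) = (d u)⁻¹ * star (H₁ u v) * d v))

/-- `M` is switching isomorphic to an induced subgraph (principal submatrix) of `H`. -/
def IsSwitchSub {V U : Type*} (M : Matrix V V ℂ) (H : Matrix U U ℂ) : Prop :=
  ∃ f : V → U, Function.Injective f ∧ IsSwitchIso M (H.submatrix f f)

/-- `x` is the largest positive real root of `p`. -/
def IsMaxPosRoot (p : Polynomial ℝ) (x : ℝ) : Prop :=
  0 < x ∧ p.eval x = 0 ∧ ∀ y : ℝ, 0 < y → p.eval y = 0 → y ≤ x

/-- The mixed graph obtained from `H` by attaching a pendant path of `n` new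
vertices at `v`. -/
noncomputable def attachPath {V : Type*} [DecidableEq V] (H : Matrix V V ℂ) (v : V) (n : ℕ) :
    Matrix (V ⊕ Fin n) (V ⊕ Fin n) ℂ :=
  Matrix.of fun a b =>
    match a, b with
    | Sum.inl u, Sum.inl w => H u w
    | Sum.inl u, Sum.inr i => if u = v ∧ (i : ℕ) = 0 then 1 else 0
    | Sum.inr i, Sum.inl u => if u = v ∧ (i : ℕ) = 0 then 1 else 0
    | Sum.inr i, Sum.inr j => if (i : ℕ) + 1 = (j : ℕ) ∨ (j : ℕ) + 1 = (i : ℕ) then 1 else 0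

/-! Expanding a determinant along its last row and then its last column gives the bordered
formula `det [[A, b], [c, d]] = d * det A - c * adj A * b`. For `X - H` with the pendant vertex
`n - 1` as border, only its neighbour `0` contributes, and removing `0` from the cycle leaves the
path `p_{n-2}`. For the imaginary cycle on `0, …, n - 2` with border `n - 2`, the neighbours `0`
and `n - 3` give the diagonal terms `2 p_{n-3}`, while the two off-diagonal terms are `±i` times
triangular minors equal to `1`, and cancel. -/

open Matrix Fin

theorem Matrix.det_fin_succ_bordered {R : Type*} [CommRing R] {k : ℕ}
    (M : Matrix (Fin (k + 1)) (Fin (k + 1)) R) :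
    M.det = M (last k) (last k) * (M.submatrix castSucc castSucc).det -
      ∑ i, ∑ j, M (last k) i.castSucc * adjugate (M.submatrix castSucc castSucc) i j *
        M j.castSucc (last k) := by
  cases k with
  | zero => simp [det_unique]
  | succ k =>
    set A := M.submatrix castSucc castSucc
    have minor (i : Fin (k + 1)) : (-1) ^ (k + 1 + i : ℕ) *
        (M.submatrix castSucc i.castSucc.succAbove).det =
        -∑ j, adjugate A i j * M j.castSucc (last (k + 1)) := by
      rw [det_succ_column _ (last k), Finset.mul_sum, ← Finset.sum_neg_distrib]
      refine Finset.sum_congr rfl fun j _ => ?_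
      have hA : M.submatrix (castSucc ∘ j.succAbove) (i.castSucc.succAbove ∘ castSucc) =
          A.submatrix j.succAbove i.succAbove := by
        ext; simp [A]
      have hsign : (-1 : R) ^ (k + 1 + i : ℕ) * (-1) ^ (j + k : ℕ) = -(-1) ^ (j + i : ℕ) := by
        rw [← pow_add, show k + 1 + i + (j + k) = j + i + 1 + 2 * k by ring, pow_add, pow_add,
          pow_mul]
        simp
      simp only [submatrix_apply, succAbove_ne_last_last (castSucc_lt_last i).ne, succAbove_last,
        submatrix_submatrix, hA, adjugate_fin_succ_eq_det_submatrix, val_last]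
      linear_combination (M j.castSucc (last (k + 1)) *
        (A.submatrix j.succAbove i.succAbove).det) * hsign
    rw [det_succ_row M (last (k + 1)), Fin.sum_univ_castSucc, add_comm, sub_eq_add_neg,
      ← Finset.sum_neg_distrib]
    simp only [succAbove_last, val_last, val_castSucc, Even.neg_one_pow ⟨k + 1, rfl⟩, one_mul]
    congr 1
    refine Finset.sum_congr rfl fun i _ => ?_
    rw [mul_right_comm, minor, neg_mul, Finset.sum_mul]
    congr 1
    exact Finset.sum_congr rfl fun j _ => by ring

theorem Matrix.charmatrix_submatrix {R m n : Type*} [CommRing R] [DecidableEq m] [DecidableEq n]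
    [Fintype m] [Fintype n] (M : Matrix n n R) {f : m → n} (hf : Function.Injective f) :
    (charmatrix M).submatrix f f = charmatrix (M.submatrix f f) := by
  ext i j : 1
  rcases eq_or_ne i j with rfl | h
  · simp [charmatrix_apply_eq]
  · simp [charmatrix_apply_ne _ _ _ h, charmatrix_apply_ne _ _ _ (hf.ne h)]

theorem Matrix.adjugate_charmatrix_fin_succ_self {R : Type*} [CommRing R] {k : ℕ}
    (M : Matrix (Fin (k + 1)) (Fin (k + 1)) R) (i : Fin (k + 1)) :
    adjugate (charmatrix M) i i = (M.submatrix i.succAbove i.succAbove).charpoly := by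
  rw [adjugate_fin_succ_eq_det_submatrix, ← two_mul, pow_mul, neg_one_sq, one_pow, one_mul,
    charmatrix_submatrix _ succAbove_right_injective, Matrix.charpoly]

theorem Matrix.charpoly_fin_succ_bordered {R : Type*} [CommRing R] {k : ℕ}
    (M : Matrix (Fin (k + 1)) (Fin (k + 1)) R) (s : Finset (Fin k))
    (hrow : ∀ i ∉ s, M (last k) i.castSucc = 0) (hcol : ∀ j ∉ s, M j.castSucc (last k) = 0) :
    M.charpoly = (X - C (M (last k) (last k))) * (M.submatrix castSucc castSucc).charpoly -
      ∑ i ∈ s, ∑ j ∈ s, C (M (last k) i.castSucc * M j.castSucc (last k)) *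
        adjugate (charmatrix (M.submatrix castSucc castSucc)) i j := by
  have hinj := castSucc_injective k
  rw [Matrix.charpoly, det_fin_succ_bordered, charmatrix_apply_eq, charmatrix_submatrix _ hinj,
    ← Matrix.charpoly]
  congr 1
  have hrow' (i : Fin k) : charmatrix M (last k) i.castSucc = -C (M (last k) i.castSucc) :=
    charmatrix_apply_ne _ _ _ (castSucc_lt_last i).ne'
  have hcol' (j : Fin k) : charmatrix M j.castSucc (last k) = -C (M j.castSucc (last k)) :=
    charmatrix_apply_ne _ _ _ (castSucc_lt_last j).ne
  simp only [hrow', hcol']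
  rw [← Finset.sum_subset s.subset_univ fun i _ hi => by simp [hrow i hi]]
  refine Finset.sum_congr rfl fun i _ => ?_
  rw [← Finset.sum_subset s.subset_univ fun j _ hj => by simp [hcol j hj]]
  refine Finset.sum_congr rfl fun j _ => ?_
  rw [C_mul]
  ring

theorem pathAdj_submatrix_castSucc (k : ℕ) :
    (pathAdj (k + 1)).submatrix castSucc castSucc = pathAdj k := by
  ext i j
  simp [pathAdj]

theorem pathAdj_submatrix_succ (k : ℕ) : (pathAdj (k + 1)).submatrix succ succ = pathAdj k := by
  ext i j
  simp [pathAdj]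

theorem det_charmatrix_pathAdj_submatrix_castSucc_succ (k : ℕ) :
    ((charmatrix (pathAdj (k + 1))).submatrix castSucc succ).det = (-1) ^ k := by
  rw [det_of_isLowerTriangular]
  · have hdiag (i : Fin k) : charmatrix (pathAdj (k + 1)) i.castSucc i.succ = -1 := by
      rw [charmatrix_apply_ne _ _ _ (castSucc_lt_succ (i := i)).ne]
      simp [pathAdj]
    simp [hdiag]
  · intro i j (hij : i < j)
    rw [submatrix_apply, charmatrix_apply_ne _ _ _ (castSucc_lt_succ_iff.mpr hij.le).ne]
    simp [pathAdj]
    omega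

theorem det_charmatrix_pathAdj_submatrix_succ_castSucc (k : ℕ) :
    ((charmatrix (pathAdj (k + 1))).submatrix succ castSucc).det = (-1) ^ k := by
  rw [det_of_isUpperTriangular]
  · have hdiag (i : Fin k) : charmatrix (pathAdj (k + 1)) i.succ i.castSucc = -1 := by
      rw [charmatrix_apply_ne _ _ _ (castSucc_lt_succ (i := i)).ne']
      simp [pathAdj]
    simp [hdiag]
  · intro i j (hij : j < i)
    rw [submatrix_apply, charmatrix_apply_ne _ _ _ (castSucc_lt_succ_iff.mpr hij.le).ne']
    simp [pathAdj]
    omega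

theorem adjugate_charmatrix_pathAdj_zero_last (k : ℕ) :
    adjugate (charmatrix (pathAdj (k + 1))) 0 (last k) = 1 := by
  rw [adjugate_fin_succ_eq_det_submatrix, succAbove_last, succAbove_zero,
    det_charmatrix_pathAdj_submatrix_castSucc_succ, ← pow_add]
  simp

theorem adjugate_charmatrix_pathAdj_last_zero (k : ℕ) :
    adjugate (charmatrix (pathAdj (k + 1))) (last k) 0 = 1 := by
  rw [adjugate_fin_succ_eq_det_submatrix, succAbove_last, succAbove_zero,
    det_charmatrix_pathAdj_submatrix_succ_castSucc, ← pow_add]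
  simp

theorem charpoly_cpPend_submatrix_castSucc (m : ℕ) :
    ((CpPend (m + 4)).submatrix castSucc castSucc).charpoly =
      X * pPoly (m + 2) - 2 * pPoly (m + 1) := by
  set H := (CpPend (m + 4)).submatrix castSucc castSucc
  have hpath : H.submatrix castSucc castSucc = pathAdj (m + 2) := by
    ext i j
    have := i.isLt; have := j.isLt
    simp [H, CpPend, mkHerm, pathAdj]
    split_ifs <;> simp <;> omega
  have hnbr (i : Fin (m + 2)) (hi : i ∉ ({0, last (m + 1)} : Finset _)) :
      H (last _) i.castSucc = 0 ∧ H i.castSucc (last _) = 0 := by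
    simp only [Finset.mem_insert, Finset.mem_singleton, not_or] at hi
    have hl : (i : ℕ) ≠ m + 1 := fun h => hi.2 (Fin.ext h)
    have := i.isLt
    simp [H, CpPend, mkHerm, hi.1, hl]
    omega
  have h00 : adjugate (charmatrix (pathAdj (m + 2))) 0 0 = pPoly (m + 1) := by
    rw [adjugate_charmatrix_fin_succ_self, succAbove_zero, pathAdj_submatrix_succ, pPoly]
  have hll : adjugate (charmatrix (pathAdj (m + 2))) (last _) (last _) = pPoly (m + 1) := by
    rw [adjugate_charmatrix_fin_succ_self, succAbove_last, pathAdj_submatrix_castSucc, pPoly]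
  have h0l : (0 : Fin (m + 2)) ≠ last (m + 1) := last_pos.ne
  rw [charpoly_fin_succ_bordered H {0, last (m + 1)} (fun i hi => (hnbr i hi).1)
    (fun j hj => (hnbr j hj).2), hpath, Finset.sum_pair h0l, Finset.sum_pair h0l,
    Finset.sum_pair h0l, h00, hll, adjugate_charmatrix_pathAdj_zero_last,
    adjugate_charmatrix_pathAdj_last_zero, ← pPoly]
  simp [H, CpPend, mkHerm]
  ring

theorem charpoly_cpPend (m : ℕ) :
    (CpPend (m + 4)).charpoly =
      X * ((CpPend (m + 4)).submatrix castSucc castSucc).charpoly - pPoly (m + 2) := by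
  have hnbr (i : Fin (m + 3)) (hi : i ∉ ({0} : Finset _)) :
      CpPend (m + 4) (last _) i.castSucc = 0 ∧ CpPend (m + 4) i.castSucc (last _) = 0 := by
    rw [Finset.mem_singleton] at hi
    have := i.isLt
    simp [CpPend, mkHerm, hi]
    omega
  have hpath : ((CpPend (m + 4)).submatrix castSucc castSucc).submatrix succ succ =
      pathAdj (m + 2) := by
    ext i j
    have := i.isLt; have := j.isLt
    simp [CpPend, mkHerm, pathAdj]
    split_ifs <;> simp <;> omega
  rw [charpoly_fin_succ_bordered _ {0} (fun i hi => (hnbr i hi).1) (fun j hj => (hnbr j hj).2),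
    Finset.sum_singleton, Finset.sum_singleton, adjugate_charmatrix_fin_succ_self, succAbove_zero,
    hpath, ← pPoly]
  simp [CpPend, mkHerm]

/-- charpoly identity for `C'_{n-1,n}`. -/
theorem stmt5 (n : ℕ) (hn : 4 ≤ n) :
    (CpPend n).charpoly = X * (X * pPoly (n - 2) - 2 * pPoly (n - 3)) - pPoly (n - 2) := by
  obtain ⟨m, rfl⟩ : ∃ m, n = m + 4 := ⟨n - 4, by omega⟩
  rw [charpoly_cpPend, charpoly_cpPend_submatrix_castSucc]
  rfl
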